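/- arXiv:2307.05122 — 5 statements merged into one kernel-verified Lean document; each statement's English description precedes it below -/
import Mathlib

section
/- (Theorem 1, identification of the counterfactual prediction.) Suppose there exists w* ∈ Δ such that Σ_{k=1}^K m_k(x) w*_k = m₀(x) for P₀-almost every x ∈ X, and that the K×K Gram matrix H with entries H_{jk} = ∫_S m_j m_k dP₀ is invertible. Let w₀ be the unique minimizer over Δ of ρ²(w) := ∫_S (Σ_{k=1}^K m_k w_k − m₀)² dP₀. Then θ₀ := ∫_X m₀ dP₀ satisfies θ₀ = ∫_S m₀ dP₀ + ∫_{X∖S} Σ_{k=1}^K m_k(x) w₀,k dP₀(x). -/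
/-!
Since `ρ² ≥ 0` and `ρ²(w*) = 0` by transferability, the minimizer also has `ρ²(w₀) = 0`, i.e.
`Σ_k m_k w₀,k = m₀ = Σ_k m_k w*_k` a.e. on `S`. Integrating this identity against each `m_j`
over `S` gives `H (w₀ - w*) = 0`, so `w₀ = w*` by invertibility of `H`. Transferability then
holds with `w₀` on all of `X`, in particular on `X ∖ S`, which is the claimed decomposition.
-/

open MeasureTheory Matrix

/-- The simplex `Δ = {w ∈ ℝ^K : w_j ≥ 0 for all j, Σ_j w_j = 1}`. -/
def simplex (K : ℕ) : Set (Fin K → ℝ) :=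
  {w | (∀ j, 0 ≤ w j) ∧ ∑ j, w j = 1}

section GramMatrix

variable {X ι : Type*} [MeasurableSpace X] [Fintype ι] {μ : Measure X} {m : ι → X → ℝ}

noncomputable def gramMatrix (μ : Measure X) (m : ι → X → ℝ) : Matrix ι ι ℝ :=
  Matrix.of fun j k => ∫ x, m j x * m k x ∂μ

theorem gramMatrix_mulVec_eq_zero (hm : ∀ k, MemLp (m k) 2 μ) {d : ι → ℝ}
    (hd : ∀ᵐ x ∂μ, ∑ k, m k x * d k = 0) : gramMatrix μ m *ᵥ d = 0 := by
  funext j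
  have hint : ∀ k, Integrable (fun x => m j x * m k x * d k) μ := fun k =>
    ((hm j).integrable_mul (hm k)).mul_const (d k)
  calc (gramMatrix μ m *ᵥ d) j = ∫ x, ∑ k, m j x * m k x * d k ∂μ := by
        simp only [mulVec, dotProduct, gramMatrix, of_apply, ← integral_mul_const]
        exact (integral_finsetSum _ fun k _ => hint k).symm
    _ = ∫ _, (0 : ℝ) ∂μ := by
        refine integral_congr_ae ?_
        filter_upwards [hd] with x hx
        simp only [mul_assoc, ← Finset.mul_sum, hx, mul_zero]
    _ = 0 := integral_zero _ _

theorem eq_of_ae_sum_mul_eq [DecidableEq ι] (hm : ∀ k, MemLp (m k) 2 μ)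
    (hH : IsUnit (gramMatrix μ m).det) {v w : ι → ℝ}
    (hvw : ∀ᵐ x ∂μ, ∑ k, m k x * v k = ∑ k, m k x * w k) : v = w := by
  have hmulVec : gramMatrix μ m *ᵥ (v - w) = 0 := by
    refine gramMatrix_mulVec_eq_zero hm ?_
    filter_upwards [hvw] with x hx
    simp only [Pi.sub_apply, mul_sub, Finset.sum_sub_distrib, hx, sub_self]
  exact sub_eq_zero.mp (eq_zero_of_mulVec_eq_zero hH.ne_zero hmulVec)

end GramMatrix

section LeastSquares

variable {X ι : Type*} [MeasurableSpace X] [Fintype ι] {μ : Measure X}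

theorem memLp_sum_mul {m : ι → X → ℝ} (hm : ∀ k, MemLp (m k) 2 μ) (w : ι → ℝ) :
    MemLp (fun x => ∑ k, m k x * w k) 2 μ :=
  memLp_finsetSum _ fun k _ => (hm k).mul_const (w k)

theorem ae_eq_of_integral_sub_sq_eq_zero {f g : X → ℝ} (hf : MemLp f 2 μ) (hg : MemLp g 2 μ)
    (h : ∫ x, (f x - g x) ^ 2 ∂μ = 0) : f =ᵐ[μ] g := by
  have hsq :=
    (integral_eq_zero_iff_of_nonneg (fun x => sq_nonneg _) (hf.sub hg).integrable_sq).mp h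
  filter_upwards [hsq] with x hx
  exact sub_eq_zero.mp (pow_eq_zero_iff two_ne_zero |>.mp hx)

theorem ae_sum_mul_eq_of_forall_le {m : ι → X → ℝ} {m₀ : X → ℝ} (hm : ∀ k, MemLp (m k) 2 μ)
    (hm₀ : MemLp m₀ 2 μ) {W : Set (ι → ℝ)} {wstar w₀ : ι → ℝ} (hwstar : wstar ∈ W)
    (hexact : ∀ᵐ x ∂μ, ∑ k, m k x * wstar k = m₀ x)
    (hmin : ∀ w ∈ W, ∫ x, (∑ k, m k x * w₀ k - m₀ x) ^ 2 ∂μ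
      ≤ ∫ x, (∑ k, m k x * w k - m₀ x) ^ 2 ∂μ) :
    ∀ᵐ x ∂μ, ∑ k, m k x * w₀ k = m₀ x := by
  have hstar : ∫ x, (∑ k, m k x * wstar k - m₀ x) ^ 2 ∂μ = 0 := by
    rw [← integral_zero X ℝ]
    refine integral_congr_ae ?_
    filter_upwards [hexact] with x hx
    simp [hx]
  refine ae_eq_of_integral_sub_sq_eq_zero (memLp_sum_mul hm w₀) hm₀ (le_antisymm ?_ ?_)
  · exact hstar ▸ hmin wstar hwstar
  · exact integral_nonneg fun x => sq_nonneg _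

end LeastSquares

theorem stmt1_general {K : ℕ} {X : Type*} [MeasurableSpace X]
    (P₀ : Measure X) [IsProbabilityMeasure P₀]
    (S : Set X) (hS : MeasurableSet S)
    (m₀ : X → ℝ) (m : Fin K → X → ℝ)
    (hm₀L2 : MemLp m₀ 2 P₀) (hmL2 : ∀ k, MemLp (m k) 2 P₀)
    (wstar : Fin K → ℝ) (hwstar : wstar ∈ simplex K)
    (htrans : ∀ᵐ x ∂P₀, ∑ k, m k x * wstar k = m₀ x)
    (hH : IsUnit (Matrix.of fun j k : Fin K => ∫ x in S, m j x * m k x ∂P₀).det)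
    (w₀ : Fin K → ℝ)
    (hw₀min : ∀ w ∈ simplex K,
      (∫ x in S, (∑ k, m k x * w₀ k - m₀ x) ^ 2 ∂P₀)
        ≤ ∫ x in S, (∑ k, m k x * w k - m₀ x) ^ 2 ∂P₀) :
    ∫ x, m₀ x ∂P₀
      = (∫ x in S, m₀ x ∂P₀) + ∫ x in Sᶜ, (∑ k, m k x * w₀ k) ∂P₀ := by
  have hmL2S : ∀ k, MemLp (m k) 2 (P₀.restrict S) := fun k => (hmL2 k).restrict S
  have hw₀S : ∀ᵐ x ∂P₀.restrict S, ∑ k, m k x * w₀ k = m₀ x :=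
    ae_sum_mul_eq_of_forall_le hmL2S (hm₀L2.restrict S) hwstar (ae_restrict_of_ae htrans) hw₀min
  have hw₀ : w₀ = wstar := by
    refine eq_of_ae_sum_mul_eq hmL2S hH ?_
    filter_upwards [hw₀S, ae_restrict_of_ae htrans] with x h₀ hstar
    rw [h₀, hstar]
  rw [← integral_add_compl hS (hm₀L2.integrable one_le_two)]
  congr 1
  refine integral_congr_ae ?_
  filter_upwards [ae_restrict_of_ae htrans] with x hx
  rw [hw₀, hx]

/-- Theorem 1 (identification of the counterfactual prediction): under synthetic
transferability (with some `w* ∈ Δ`) and invertibility of the Gram matrix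
`H_{jk} = ∫_S m_j m_k dP₀`, if `w₀` is the unique minimizer over `Δ` of
`ρ²(w) = ∫_S (Σ_k m_k w_k − m₀)² dP₀`, then
`θ₀ = ∫_X m₀ dP₀ = ∫_S m₀ dP₀ + ∫_{X∖S} Σ_k m_k w₀,k dP₀`. -/
theorem stmt1 {K : ℕ} (hK : 0 < K) {X : Type*} [MeasurableSpace X]
    (P₀ : Measure X) [IsProbabilityMeasure P₀]
    (S : Set X) (hS : MeasurableSet S)
    (m₀ : X → ℝ) (m : Fin K → X → ℝ)
    (hm₀meas : Measurable m₀) (hmmeas : ∀ k, Measurable (m k))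
    (hm₀L2 : MemLp m₀ 2 P₀) (hmL2 : ∀ k, MemLp (m k) 2 P₀)
    (wstar : Fin K → ℝ) (hwstar : wstar ∈ simplex K)
    (htrans : ∀ᵐ x ∂P₀, ∑ k, m k x * wstar k = m₀ x)
    (hH : IsUnit (Matrix.of fun j k : Fin K => ∫ x in S, m j x * m k x ∂P₀).det)
    (w₀ : Fin K → ℝ) (hw₀ : w₀ ∈ simplex K)
    (hw₀min : ∀ w ∈ simplex K,
      (∫ x in S, (∑ k, m k x * w₀ k - m₀ x) ^ 2 ∂P₀)
        ≤ ∫ x in S, (∑ k, m k x * w k - m₀ x) ^ 2 ∂P₀) :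
    ∫ x, m₀ x ∂P₀
      = (∫ x in S, m₀ x ∂P₀) + ∫ x in Sᶜ, (∑ k, m k x * w₀ k) ∂P₀ :=
  stmt1_general P₀ S hS m₀ m hm₀L2 hmL2 wstar hwstar htrans hH w₀ hw₀min
end

section
/- (Identification with covariate-dependent weights.) Let t : X → T be measurable and let κ be a Markov kernel from T to X disintegrating P₀ along t, i.e., for (t∗P₀)-almost every t̃, κ(t̃) is a probability measure concentrated on t⁻¹({t̃}), and ∫_X f dP₀ = ∫_T (∫_X f dκ(t̃)) d(t∗P₀)(t̃) for every bounded measurable f : X → ℝ. For t̃ ∈ T let H(t̃) be the K×K matrix with entries ∫_S m_j m_k dκ(t̃), and assume H(t̃) is invertible for (t∗P₀)-almost every t̃. Suppose there exists a measurable map w* : T → Δ such that Σ_{k=1}^K m_k(x) w*_k(t(x)) = m₀(x) for P₀-almost every x ∈ X. Then for (t∗P₀)-almost every t̃, w*(t̃) is the unique minimizer over Δ of w ↦ ∫_S (Σ_{k=1}^K m_k w_k − m₀)² dκ(t̃), and θ₀ := ∫_X m₀ dP₀ = ∫_S m₀ dP₀ + ∫_{X∖S} Σ_{k=1}^K m_k(x)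 w*_k(t(x)) dP₀(x). -/
open MeasureTheory Matrix

/-!
Disintegrating the indicator of the set where `Σ_k m_k w*_k(t) = m₀` shows that this identity
holds `κ(t̃)`-a.e. for a.e. `t̃`; since `κ(t̃)` lives on the fibre `t = t̃`, it reads
`Σ_k m_k w*_k(t̃) = m₀` there. Hence `w*(t̃)` has zero loss, while the loss of any `w` equals
`∫_S (Σ_k m_k d_k)²` with `d = w - w*(t̃)`. If that vanishes, `Σ_k m_k d_k = 0` a.e. on `S`,
so `H(t̃) d = 0` and `d = 0` by invertibility of the Gram matrix `H(t̃)`.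
-/

section Gram

variable {X ι : Type*} [MeasurableSpace X] [Fintype ι] {μ : Measure X} {m : ι → X → ℝ}

noncomputable def l2Gram (μ : Measure X) (m : ι → X → ℝ) : Matrix ι ι ℝ :=
  Matrix.of fun j k => ∫ x, m j x * m k x ∂μ

lemma l2Gram_mulVec_apply (hm : ∀ k, MemLp (m k) 2 μ) (d : ι → ℝ) (j : ι) :
    (l2Gram μ m *ᵥ d) j = ∫ x, m j x * ∑ k, m k x * d k ∂μ := by
  have hint : ∀ k, Integrable (fun x => m j x * m k x * d k) μ :=
    fun k => ((hm j).integrable_mul (hm k)).mul_const _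
  simp only [mulVec, dotProduct, l2Gram, of_apply, Finset.mul_sum, ← mul_assoc]
  rw [integral_finsetSum _ fun k _ => hint k]
  exact Finset.sum_congr rfl fun k _ => (integral_mul_const _ _).symm

lemma eq_zero_of_ae_sum_mul_eq_zero [DecidableEq ι] (hm : ∀ k, MemLp (m k) 2 μ)
    (hdet : IsUnit (l2Gram μ m).det) {d : ι → ℝ} (hd : ∀ᵐ x ∂μ, ∑ k, m k x * d k = 0) :
    d = 0 := by
  refine eq_zero_of_mulVec_eq_zero hdet.ne_zero (funext fun j => ?_)
  rw [l2Gram_mulVec_apply hm, Pi.zero_apply]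
  exact integral_eq_zero_of_ae (by filter_upwards [hd] with x hx; simp [hx])

lemma integral_sq_sum_mul_sub_lt [DecidableEq ι] (hm : ∀ k, MemLp (m k) 2 μ)
    (hdet : IsUnit (l2Gram μ m).det) {m₀ : X → ℝ} {ws w : ι → ℝ}
    (hws : ∀ᵐ x ∂μ, ∑ k, m k x * ws k = m₀ x) (hw : w ≠ ws) :
    ∫ x, (∑ k, m k x * ws k - m₀ x) ^ 2 ∂μ < ∫ x, (∑ k, m k x * w k - m₀ x) ^ 2 ∂μ := by
  set g : X → ℝ := fun x => ∑ k, m k x * (w - ws) k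
  have hloss_ws : ∫ x, (∑ k, m k x * ws k - m₀ x) ^ 2 ∂μ = 0 :=
    integral_eq_zero_of_ae (by filter_upwards [hws] with x hx; simp [hx])
  have hloss_w : ∫ x, (∑ k, m k x * w k - m₀ x) ^ 2 ∂μ = ∫ x, g x ^ 2 ∂μ := by
    refine integral_congr_ae ?_
    filter_upwards [hws] with x hx
    simp only [g, ← hx, Pi.sub_apply, mul_sub, Finset.sum_sub_distrib]
  rw [hloss_ws, hloss_w]
  refine (integral_nonneg fun x => sq_nonneg (g x)).lt_of_ne fun hzero => hw ?_
  have hg : MemLp g 2 μ := memLp_finsetSum _ fun k _ => (hm k).mul_const _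
  have hg_sq : ∀ᵐ x ∂μ, g x ^ 2 = 0 :=
    (integral_eq_zero_iff_of_nonneg (fun x => sq_nonneg (g x)) hg.integrable_sq).mp hzero.symm
  exact sub_eq_zero.mp <| eq_zero_of_ae_sum_mul_eq_zero hm hdet <|
    hg_sq.mono fun x hx => pow_eq_zero_iff two_ne_zero |>.mp hx

end Gram

lemma ae_ae_of_ae_of_integral_eq_integral_integral {X T : Type*} [MeasurableSpace X]
    [MeasurableSpace T] {P₀ : Measure X} [IsProbabilityMeasure P₀] {ν : Measure T}
    [IsProbabilityMeasure ν] {κ : T → Measure X}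
    (hκ : ∀ᵐ tt ∂ν, IsProbabilityMeasure (κ tt))
    (hdisint : ∀ f : X → ℝ, Measurable f → (∃ C : ℝ, ∀ x, |f x| ≤ C) →
      ∫ x, f x ∂P₀ = ∫ tt, (∫ x, f x ∂(κ tt)) ∂ν)
    {s : Set X} (hs : MeasurableSet s) (h : ∀ᵐ x ∂P₀, x ∈ s) :
    ∀ᵐ tt ∂ν, ∀ᵐ x ∂(κ tt), x ∈ s := by
  have hbdd : ∃ C : ℝ, ∀ x, |s.indicator (1 : X → ℝ) x| ≤ C :=
    ⟨1, fun x => by by_cases hx : x ∈ s <;> simp [hx]⟩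
  have hone : ∫ tt, (κ tt).real s ∂ν = 1 := by
    have := hdisint (s.indicator 1) (measurable_one.indicator hs) hbdd
    simp only [integral_indicator_one hs] at this
    rw [← this, measureReal_def, (ae_mem_iff_measure_eq hs.nullMeasurableSet).mp h]
    simp
  -- `κ` is not assumed measurable, but a non-integrable integrand would have integral `0`.
  have hint : Integrable (fun tt => (κ tt).real s) ν := by
    by_contra hcon
    rw [integral_undef hcon] at hone
    exact zero_ne_one hone
  have hle : ∀ᵐ tt ∂ν, (κ tt).real s ≤ 1 := hκ.mono fun tt _ => measureReal_le_one
  have hgap : ∀ᵐ tt ∂ν, 1 - (κ tt).real s = 0 := by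
    refine (integral_eq_zero_iff_of_nonneg_ae (hle.mono fun tt h => sub_nonneg.mpr h)
      ((integrable_const 1).sub hint)).mp ?_
    rw [integral_sub (integrable_const 1) hint, hone]
    simp
  filter_upwards [hκ, hgap] with tt hprob htt
  rw [ae_mem_iff_measure_eq hs.nullMeasurableSet, measure_univ]
  rwa [measureReal_def, sub_eq_zero, eq_comm, ENNReal.toReal_eq_one_iff] at htt

theorem stmt5_general {K : ℕ} {X T : Type*}
    [MeasurableSpace X] [MeasurableSpace T]
    (P₀ : Measure X) [IsProbabilityMeasure P₀]
    (S : Set X) (hS : MeasurableSet S)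
    (m₀ : X → ℝ) (m : Fin K → X → ℝ)
    (hm₀meas : Measurable m₀) (hmmeas : ∀ k, Measurable (m k))
    (hm₀L2 : MemLp m₀ 2 P₀)
    (t : X → T) (ht : Measurable t)
    (κ : T → Measure X)
    (hκprob : ∀ᵐ tt ∂(P₀.map t), IsProbabilityMeasure (κ tt) ∧ κ tt ((t ⁻¹' {tt})ᶜ) = 0)
    (hdisint : ∀ f : X → ℝ, Measurable f → (∃ C : ℝ, ∀ x, |f x| ≤ C) →
      ∫ x, f x ∂P₀ = ∫ tt, (∫ x, f x ∂(κ tt)) ∂(P₀.map t))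
    (hmL2κ : ∀ᵐ tt ∂(P₀.map t), ∀ k, MemLp (m k) 2 (κ tt))
    (hHinv : ∀ᵐ tt ∂(P₀.map t),
      IsUnit (Matrix.of fun j k : Fin K => ∫ x in S, m j x * m k x ∂(κ tt)).det)
    (wstar : T → Fin K → ℝ) (hwstarmeas : Measurable wstar)
    (htrans : ∀ᵐ x ∂P₀, ∑ k, m k x * wstar (t x) k = m₀ x) :
    (∀ᵐ tt ∂(P₀.map t),
      ∀ w ∈ simplex K, w ≠ wstar tt →
        (∫ x in S, (∑ k, m k x * wstar tt k - m₀ x) ^ 2 ∂(κ tt))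
          < ∫ x in S, (∑ k, m k x * w k - m₀ x) ^ 2 ∂(κ tt)) ∧
    ∫ x, m₀ x ∂P₀
      = (∫ x in S, m₀ x ∂P₀) + ∫ x in Sᶜ, (∑ k, m k x * wstar (t x) k) ∂P₀ := by
  have := Measure.isProbabilityMeasure_map (μ := P₀) ht.aemeasurable
  have htrans_meas : MeasurableSet {x | ∑ k, m k x * wstar (t x) k = m₀ x} :=
    measurableSet_eq_fun (by fun_prop) hm₀meas
  have htrans_κ := ae_ae_of_ae_of_integral_eq_integral_integral (hκprob.mono fun _ h => h.1)
    hdisint htrans_meas htrans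
  refine ⟨?_, ?_⟩
  · filter_upwards [hκprob, hmL2κ, hHinv, htrans_κ] with tt ⟨_, hfibre⟩ hmκ hH htr w _ hw
    refine integral_sq_sum_mul_sub_lt (fun k => (hmκ k).restrict S) hH ?_ hw
    filter_upwards [ae_restrict_of_ae htr, ae_restrict_of_ae (ae_iff.mpr hfibre)]
      with x hx (hxt : t x = tt)
    rwa [← hxt]
  · rw [← integral_add_compl hS (hm₀L2.integrable one_le_two)]
    congr 1
    refine integral_congr_ae ?_
    filter_upwards [ae_restrict_of_ae htrans] with x hx using hx.symm

/-- Identification with covariate-dependent weights: if `κ` disintegrates `P₀` along a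
measurable `t : X → T`, the conditional Gram matrices `H(tt)` are a.e. invertible, and a
measurable `w* : T → Δ` satisfies `Σ_k m_k(x) w*_k(t(x)) = m₀(x)` `P₀`-a.e., then for
`(t∗P₀)`-a.e. `tt`, `w*(tt)` is the unique minimizer over `Δ` of
`w ↦ ∫_S (Σ_k m_k w_k − m₀)² dκ(tt)`, and
`θ₀ = ∫ m₀ dP₀ = ∫_S m₀ dP₀ + ∫_{X∖S} Σ_k m_k(x) w*_k(t(x)) dP₀(x)`. -/
theorem stmt5 {K : ℕ} (hK : 0 < K) {X T : Type*}
    [MeasurableSpace X] [MeasurableSpace T]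
    (P₀ : Measure X) [IsProbabilityMeasure P₀]
    (S : Set X) (hS : MeasurableSet S)
    (m₀ : X → ℝ) (m : Fin K → X → ℝ)
    (hm₀meas : Measurable m₀) (hmmeas : ∀ k, Measurable (m k))
    (hm₀L2 : MemLp m₀ 2 P₀) (hmL2 : ∀ k, MemLp (m k) 2 P₀)
    (t : X → T) (ht : Measurable t)
    (κ : T → Measure X)
    (hκprob : ∀ᵐ tt ∂(P₀.map t), IsProbabilityMeasure (κ tt) ∧ κ tt ((t ⁻¹' {tt})ᶜ) = 0)
    (hdisint : ∀ f : X → ℝ, Measurable f → (∃ C : ℝ, ∀ x, |f x| ≤ C) →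
      ∫ x, f x ∂P₀ = ∫ tt, (∫ x, f x ∂(κ tt)) ∂(P₀.map t))
    (hm₀L2κ : ∀ᵐ tt ∂(P₀.map t), MemLp m₀ 2 (κ tt))
    (hmL2κ : ∀ᵐ tt ∂(P₀.map t), ∀ k, MemLp (m k) 2 (κ tt))
    (hHinv : ∀ᵐ tt ∂(P₀.map t),
      IsUnit (Matrix.of fun j k : Fin K => ∫ x in S, m j x * m k x ∂(κ tt)).det)
    (wstar : T → Fin K → ℝ) (hwstarmeas : Measurable wstar)
    (hwstarΔ : ∀ tt, wstar tt ∈ simplex K)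
    (htrans : ∀ᵐ x ∂P₀, ∑ k, m k x * wstar (t x) k = m₀ x) :
    (∀ᵐ tt ∂(P₀.map t),
      ∀ w ∈ simplex K, w ≠ wstar tt →
        (∫ x in S, (∑ k, m k x * wstar tt k - m₀ x) ^ 2 ∂(κ tt))
          < ∫ x in S, (∑ k, m k x * w k - m₀ x) ^ 2 ∂(κ tt)) ∧
    ∫ x, m₀ x ∂P₀
      = (∫ x in S, m₀ x ∂P₀) + ∫ x in Sᶜ, (∑ k, m k x * wstar (t x) k) ∂P₀ :=
  stmt5_general P₀ S hS m₀ m hm₀meas hmmeas hm₀L2 t ht κ hκprob hdisint hmL2κ hHinv wstar hwstarmeas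
    htrans
end

section
/- (Continuity of weighted projections onto the cones, part (i).) Let Ω_n be a sequence of symmetric positive definite K×K real matrices with Ω_n → Ω₀ as n → ∞, where Ω₀ is symmetric positive definite; let y_n ∈ ℝ^K be a sequence with y_n → y₀ ∈ ℝ^K; and let w_n ∈ Δ be an arbitrary sequence. Then ‖Π_{Ω_n}(y_n | Λ(w_n)) − Π_{Ω₀}(y₀ | Λ(w_n))‖ → 0 as n → ∞. -/
open Matrix Filter

/-- The `Ω`-weighted norm `‖x‖_Ω = √(xᵀΩ⁻¹x)`. -/
noncomputable def wnorm {K : ℕ} (Ω : Matrix (Fin K) (Fin K) ℝ) (x : Fin K → ℝ) : ℝ :=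
  Real.sqrt (x ⬝ᵥ (Ω⁻¹ *ᵥ x))

/-!
Write `Qₙ x = (yₙ - x)ᵀ Ωₙ⁻¹ (yₙ - x)` and `Q x = (y₀ - x)ᵀ Ω₀⁻¹ (y₀ - x)`. Since `Λ(wₙ)` is convex
and `qₙ` minimizes `Q` on it, the parallelogram identity at the midpoint of `pₙ` and `qₙ` gives
`‖pₙ - qₙ‖²_{Ω₀} ≤ 2 (Q pₙ - Q qₙ)`, and minimality of `pₙ` for `Qₙ` bounds the right-hand side by
`2 ((Qₙ - Q) qₙ - (Qₙ - Q) pₙ)`. Comparing with the feasible point `0`, and using that `Ωₙ⁻¹` is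
eventually uniformly positive definite, both `pₙ` and `qₙ` eventually lie in a fixed ball, on
which `Qₙ → Q` uniformly; hence the right-hand side tends to `0`.
-/

open Topology

theorem IsCompact.tendstoUniformlyOn_comp_of_continuous {X Z E α : Type*} [TopologicalSpace X]
    [TopologicalSpace Z] [PseudoMetricSpace E] {F : X → Z → E} (hF : Continuous ↿F)
    {S : Set Z} (hS : IsCompact S) {l : Filter α} {a : α → X} {a₀ : X}
    (ha : Tendsto a l (𝓝 a₀)) :
    TendstoUniformlyOn (fun n => F (a n)) (F a₀) l S := by
  rw [Metric.tendstoUniformlyOn_iff]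
  intro ε hε
  obtain ⟨v, hv, hvS⟩ :=
    hS.mem_uniformity_of_prod hF.continuousOn (Set.mem_univ a₀) (Metric.dist_mem_uniformity hε)
  rw [nhdsWithin_univ] at hv
  filter_upwards [ha hv] with n hn z hz
  rw [dist_comm]
  exact hvS _ hn z hz

theorem TendstoUniformlyOn.tendsto_sub_comp {ι α : Type*} {F : ι → α → ℝ} {f : α → ℝ}
    {l : Filter ι} {S : Set α} (h : TendstoUniformlyOn F f l S) {x : ι → α}
    (hx : ∀ᶠ n in l, x n ∈ S) :
    Tendsto (fun n => F n (x n) - f (x n)) l (𝓝 0) := by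
  rw [Metric.tendsto_nhds]
  intro ε hε
  filter_upwards [Metric.tendstoUniformlyOn_iff.mp h ε hε, hx] with n hn hxn
  rw [dist_zero_right, Real.norm_eq_abs, abs_sub_comm]
  exact hn _ hxn

namespace Matrix

variable {ι : Type*} [Fintype ι]

theorem mul_sq_norm_le_dotProduct_mulVec {B : Matrix ι ι ℝ} {c : ℝ}
    (h : ∀ u ∈ Metric.sphere (0 : ι → ℝ) 1, c ≤ u ⬝ᵥ B *ᵥ u) (x : ι → ℝ) :
    c * ‖x‖ ^ 2 ≤ x ⬝ᵥ B *ᵥ x := by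
  rcases eq_or_ne x 0 with rfl | hx
  · simp
  have hnorm : ‖x‖ ≠ 0 := norm_ne_zero_iff.mpr hx
  have hu := h (‖x‖⁻¹ • x) (by simp [norm_smul, hnorm])
  calc c * ‖x‖ ^ 2 ≤ (‖x‖⁻¹ • x) ⬝ᵥ B *ᵥ (‖x‖⁻¹ • x) * ‖x‖ ^ 2 := by gcongr
    _ = x ⬝ᵥ B *ᵥ x := by
      simp only [smul_dotProduct, mulVec_smul, dotProduct_smul, smul_eq_mul]
      field_simp

theorem continuous_dotProduct_mulVec :
    Continuous ↿(fun (B : Matrix ι ι ℝ) (x : ι → ℝ) => x ⬝ᵥ B *ᵥ x) :=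
  continuous_snd.dotProduct (continuous_fst.matrix_mulVec continuous_snd)

theorem PosDef.exists_eventually_coercive {α : Type*} {l : Filter α} {A : α → Matrix ι ι ℝ}
    {A₀ : Matrix ι ι ℝ} (hA₀ : A₀.PosDef) (hA : Tendsto A l (𝓝 A₀)) :
    ∃ m > 0, (∀ x, m * ‖x‖ ^ 2 ≤ x ⬝ᵥ A₀ *ᵥ x) ∧ ∀ᶠ n in l, ∀ x, m * ‖x‖ ^ 2 ≤ x ⬝ᵥ A n *ᵥ x := by
  have hS := isCompact_sphere (0 : ι → ℝ) 1
  obtain ⟨m, hm, hmS⟩ := hS.exists_forall_le' (a := 0) (f := fun u => u ⬝ᵥ A₀ *ᵥ u)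
    (continuous_id.dotProduct (continuous_const.matrix_mulVec continuous_id)).continuousOn
    fun u hu => by simpa using hA₀.dotProduct_mulVec_pos (ne_zero_of_mem_unit_sphere ⟨u, hu⟩)
  refine ⟨m / 2, half_pos hm,
    mul_sq_norm_le_dotProduct_mulVec fun u hu => (half_le_self hm.le).trans (hmS u hu), ?_⟩
  filter_upwards [Metric.tendstoUniformlyOn_iff.mp
    (hS.tendstoUniformlyOn_comp_of_continuous continuous_dotProduct_mulVec hA) _ (half_pos hm)]
    with n hn
  refine mul_sq_norm_le_dotProduct_mulVec fun u hu => ?_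
  have hmu := hmS u hu
  have hclose := (abs_lt.mp ((Real.dist_eq _ _).symm ▸ hn u hu)).2
  linarith

end Matrix

section Projections

variable {ι : Type*} [Fintype ι]

theorem IsMinOn.sub_dotProduct_mulVec_sub_le {A : Matrix ι ι ℝ} {y x₀ x : ι → ℝ}
    {C : Set (ι → ℝ)} (hmin : IsMinOn (fun x => (y - x) ⬝ᵥ A *ᵥ (y - x)) C x₀)
    (hC : Convex ℝ C) (hx₀ : x₀ ∈ C) (hx : x ∈ C) :
    (x - x₀) ⬝ᵥ A *ᵥ (x - x₀) ≤ 2 * ((y - x) ⬝ᵥ A *ᵥ (y - x) - (y - x₀) ⬝ᵥ A *ᵥ (y - x₀)) := by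
  have hmid := isMinOn_iff.mp hmin _
    (hC hx hx₀ (by norm_num : (0 : ℝ) ≤ 1 / 2) (by norm_num : (0 : ℝ) ≤ 1 / 2) (by norm_num))
  simp only [sub_dotProduct, dotProduct_sub, mulVec_sub, mulVec_add,
    add_dotProduct, dotProduct_add, smul_dotProduct, dotProduct_smul, mulVec_smul,
    smul_eq_mul] at hmid ⊢
  linarith

theorem IsMinOn.norm_le {A : Matrix ι ι ℝ} {y x₀ : ι → ℝ} {C : Set (ι → ℝ)}
    (hmin : IsMinOn (fun x => (y - x) ⬝ᵥ A *ᵥ (y - x)) C x₀) (h0 : 0 ∈ C) {m : ℝ} (hm : 0 < m)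
    (hcoer : ∀ v, m * ‖v‖ ^ 2 ≤ v ⬝ᵥ A *ᵥ v) :
    ‖x₀‖ ≤ ‖y‖ + √(y ⬝ᵥ A *ᵥ y / m) := by
  have hdist : m * ‖y - x₀‖ ^ 2 ≤ y ⬝ᵥ A *ᵥ y := (hcoer _).trans (by simpa using hmin h0)
  calc ‖x₀‖ = ‖y - (y - x₀)‖ := by rw [sub_sub_cancel]
    _ ≤ ‖y‖ + ‖y - x₀‖ := norm_sub_le _ _
    _ ≤ ‖y‖ + √(y ⬝ᵥ A *ᵥ y / m) := by
      gcongr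
      exact Real.le_sqrt_of_sq_le ((le_div_iff₀' hm).mpr hdist)

theorem tendsto_sub_of_isMinOn {α : Type*} {l : Filter α} {A : α → Matrix ι ι ℝ}
    {A₀ : Matrix ι ι ℝ} (hA₀ : A₀.PosDef) (hA : Tendsto A l (𝓝 A₀)) {y : α → ι → ℝ}
    {y₀ : ι → ℝ} (hy : Tendsto y l (𝓝 y₀)) {C : α → Set (ι → ℝ)}
    (hC : ∀ n, Convex ℝ (C n)) (h0 : ∀ n, 0 ∈ C n) {p q : α → ι → ℝ}
    (hpC : ∀ n, p n ∈ C n) (hp : ∀ n, IsMinOn (fun x => (y n - x) ⬝ᵥ A n *ᵥ (y n - x)) (C n) (p n))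
    (hqC : ∀ n, q n ∈ C n) (hq : ∀ n, IsMinOn (fun x => (y₀ - x) ⬝ᵥ A₀ *ᵥ (y₀ - x)) (C n) (q n)) :
    Tendsto (p - q) l (𝓝 0) := by
  obtain ⟨m, hm, hcoer₀, hcoer⟩ := hA₀.exists_eventually_coercive hA
  set R := ‖y₀‖ + √(y₀ ⬝ᵥ A₀ *ᵥ y₀ / m)
  have hR : Tendsto (fun n => ‖y n‖ + √(y n ⬝ᵥ A n *ᵥ y n / m)) l (𝓝 R) :=
    hy.norm.add ((((continuous_dotProduct_mulVec.tendsto (A₀, y₀)).comp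
      (hA.prodMk_nhds hy)).div_const m).sqrt)
  have hpR : ∀ᶠ n in l, p n ∈ Metric.closedBall 0 (R + 1) := by
    filter_upwards [hcoer, hR.eventually (eventually_le_nhds (lt_add_one R))] with n hn hn'
    exact mem_closedBall_zero_iff.mpr (((hp n).norm_le (h0 n) hm hn).trans hn')
  have hqR : ∀ n, q n ∈ Metric.closedBall 0 (R + 1) := fun n =>
    mem_closedBall_zero_iff.mpr (((hq n).norm_le (h0 n) hm hcoer₀).trans (by linarith))
  have hunif := (isCompact_closedBall (0 : ι → ℝ) (R + 1)).tendstoUniformlyOn_comp_of_continuous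
    (F := fun a x => (a.2 - x) ⬝ᵥ a.1 *ᵥ (a.2 - x)) (by fun_prop) (hA.prodMk_nhds hy)
  have herr_p : Tendsto (fun n => (y n - p n) ⬝ᵥ A n *ᵥ (y n - p n) -
      (y₀ - p n) ⬝ᵥ A₀ *ᵥ (y₀ - p n)) l (𝓝 0) := hunif.tendsto_sub_comp hpR
  have herr_q : Tendsto (fun n => (y n - q n) ⬝ᵥ A n *ᵥ (y n - q n) -
      (y₀ - q n) ⬝ᵥ A₀ *ᵥ (y₀ - q n)) l (𝓝 0) :=
    hunif.tendsto_sub_comp (Eventually.of_forall hqR)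
  have hbound : ∀ n, ‖p n - q n‖ ^ 2 ≤ 2 * (((y n - q n) ⬝ᵥ A n *ᵥ (y n - q n) -
      (y₀ - q n) ⬝ᵥ A₀ *ᵥ (y₀ - q n)) - ((y n - p n) ⬝ᵥ A n *ᵥ (y n - p n) -
      (y₀ - p n) ⬝ᵥ A₀ *ᵥ (y₀ - p n))) / m := fun n => by
    rw [le_div_iff₀' hm]
    refine (hcoer₀ _).trans (((hq n).sub_dotProduct_mulVec_sub_le (hC n) (hqC n) (hpC n)).trans ?_)
    linarith [isMinOn_iff.mp (hp n) _ (hqC n)]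
  have hsq : Tendsto (fun n => ‖p n - q n‖ ^ 2) l (𝓝 0) :=
    squeeze_zero (fun n => by positivity) hbound
      (by simpa using ((herr_q.sub herr_p).const_mul 2).div_const m)
  rw [tendsto_zero_iff_norm_tendsto_zero]
  simpa [Real.sqrt_sq (norm_nonneg _)] using hsq.sqrt

/-- The cone `Λ(w)`. -/
def nonposOrthogonal (w : ι → ℝ) : Set (ι → ℝ) :=
  {x | (∀ j, x j ≤ 0) ∧ w ⬝ᵥ x = 0}

theorem convex_nonposOrthogonal (w : ι → ℝ) :
    Convex ℝ (nonposOrthogonal w) := by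
  rintro x ⟨hx, hwx⟩ x' ⟨hx', hwx'⟩ a b ha hb -
  refine ⟨fun j => ?_, by simp [dotProduct_add, dotProduct_smul, hwx, hwx']⟩
  simpa using add_nonpos (mul_nonpos_of_nonneg_of_nonpos ha (hx j))
    (mul_nonpos_of_nonneg_of_nonpos hb (hx' j))

theorem zero_mem_nonposOrthogonal (w : ι → ℝ) : 0 ∈ nonposOrthogonal w :=
  ⟨fun _ => le_rfl, dotProduct_zero w⟩

end Projections

theorem wnorm_le_wnorm_iff {K : ℕ} {Ω : Matrix (Fin K) (Fin K) ℝ} (hΩ : Ω.PosDef)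
    {u v : Fin K → ℝ} : wnorm Ω u ≤ wnorm Ω v ↔ u ⬝ᵥ Ω⁻¹ *ᵥ u ≤ v ⬝ᵥ Ω⁻¹ *ᵥ v :=
  Real.sqrt_le_sqrt_iff (by simpa using hΩ.inv.posSemidef.dotProduct_mulVec_nonneg v)

theorem stmt14_general {K : ℕ}
    (Ωn : ℕ → Matrix (Fin K) (Fin K) ℝ) (hΩn : ∀ n, (Ωn n).PosDef)
    (Ω₀ : Matrix (Fin K) (Fin K) ℝ) (hΩ₀ : Ω₀.PosDef)
    (hΩconv : Tendsto Ωn atTop (nhds Ω₀))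
    (y : ℕ → (Fin K → ℝ)) (y₀ : Fin K → ℝ)
    (hyconv : Tendsto y atTop (nhds y₀))
    (w : ℕ → (Fin K → ℝ))
    (p q : ℕ → (Fin K → ℝ))
    (hpmem : ∀ n, (∀ j, p n j ≤ 0) ∧ w n ⬝ᵥ p n = 0)
    (hpmin : ∀ n, ∀ x : Fin K → ℝ, (∀ j, x j ≤ 0) → w n ⬝ᵥ x = 0 →
      wnorm (Ωn n) (y n - p n) ≤ wnorm (Ωn n) (y n - x))
    (hqmem : ∀ n, (∀ j, q n j ≤ 0) ∧ w n ⬝ᵥ q n = 0)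
    (hqmin : ∀ n, ∀ x : Fin K → ℝ, (∀ j, x j ≤ 0) → w n ⬝ᵥ x = 0 →
      wnorm Ω₀ (y₀ - q n) ≤ wnorm Ω₀ (y₀ - x)) :
    Tendsto (fun n => Real.sqrt (∑ j, (p n j - q n j) ^ 2)) atTop (nhds 0) := by
  have hinv : Tendsto (fun n => (Ωn n)⁻¹) atTop (𝓝 Ω₀⁻¹) :=
    (continuousAt_matrix_inv Ω₀
      (NormedRing.inverse_continuousAt (Units.mk0 _ hΩ₀.det_pos.ne'))).tendsto.comp hΩconv
  have hpq : Tendsto (p - q) atTop (𝓝 0) :=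
    tendsto_sub_of_isMinOn hΩ₀.inv hinv hyconv (fun n => convex_nonposOrthogonal (w n))
      (fun n => zero_mem_nonposOrthogonal (w n)) hpmem
      (fun n x hx => (wnorm_le_wnorm_iff (hΩn n)).mp (hpmin n x hx.1 hx.2)) hqmem
      (fun n x hx => (wnorm_le_wnorm_iff hΩ₀).mp (hqmin n x hx.1 hx.2))
  have hcont : Continuous fun v : Fin K → ℝ => Real.sqrt (∑ j, v j ^ 2) := by fun_prop
  exact (hcont.tendsto' 0 0 (by simp)).comp hpq

/-- Continuity of weighted projections onto the cones, part (i): if `Ω_n → Ω₀`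
(symmetric positive definite) and `y_n → y₀`, then for any sequence `w_n ∈ Δ`,
`‖Π_{Ω_n}(y_n | Λ(w_n)) − Π_{Ω₀}(y₀ | Λ(w_n))‖ → 0` in the Euclidean norm. Here
`p n = Π_{Ω_n}(y_n | Λ(w_n))` and `q n = Π_{Ω₀}(y₀ | Λ(w_n))`, each characterized as
the minimizer of the corresponding weighted distance over `Λ(w_n)`. -/
theorem stmt14 {K : ℕ} (hK : 0 < K)
    (Ωn : ℕ → Matrix (Fin K) (Fin K) ℝ) (hΩn : ∀ n, (Ωn n).PosDef)
    (Ω₀ : Matrix (Fin K) (Fin K) ℝ) (hΩ₀ : Ω₀.PosDef)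
    (hΩconv : Tendsto Ωn atTop (nhds Ω₀))
    (y : ℕ → (Fin K → ℝ)) (y₀ : Fin K → ℝ)
    (hyconv : Tendsto y atTop (nhds y₀))
    (w : ℕ → (Fin K → ℝ)) (hw : ∀ n, w n ∈ simplex K)
    (p q : ℕ → (Fin K → ℝ))
    (hpmem : ∀ n, (∀ j, p n j ≤ 0) ∧ w n ⬝ᵥ p n = 0)
    (hpmin : ∀ n, ∀ x : Fin K → ℝ, (∀ j, x j ≤ 0) → w n ⬝ᵥ x = 0 →
      wnorm (Ωn n) (y n - p n) ≤ wnorm (Ωn n) (y n - x))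
    (hqmem : ∀ n, (∀ j, q n j ≤ 0) ∧ w n ⬝ᵥ q n = 0)
    (hqmin : ∀ n, ∀ x : Fin K → ℝ, (∀ j, x j ≤ 0) → w n ⬝ᵥ x = 0 →
      wnorm Ω₀ (y₀ - q n) ≤ wnorm Ω₀ (y₀ - x)) :
    Tendsto (fun n => Real.sqrt (∑ j, (p n j - q n j) ^ 2)) atTop (nhds 0) :=
  stmt14_general Ωn hΩn Ω₀ hΩ₀ hΩconv y y₀ hyconv w p q hpmem hpmin hqmem hqmin
end

section
/- (Basic inequality for a perturbed constrained quadratic minimizer.) Let η ≥ 0 and let H be a symmetric K×K real matrix with xᵀHx ≥ η‖x‖² for all x ∈ ℝ^K, let h ∈ ℝ^K, and define M(w) := wᵀHw − 2hᵀw. Let Ĥ be any symmetric K×K real matrix, ĥ ∈ ℝ^K, and define M̂(w) := wᵀĤw − 2ĥᵀw. Let w_P ∈ Δ be a minimizer of M over Δ, and let ŵ ∈ Δ satisfy M̂(ŵ) ≤ M̂(w_P). Then η‖ŵ − w_P‖² ≤ (M̂(w_P) − M(w_P)) − (M̂(ŵ) − M(ŵ)). -/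
open Matrix

/-- Basic inequality for a perturbed constrained quadratic minimizer: with `M` as in the
strong-convexity bound (from symmetric `H` with `xᵀHx ≥ η‖x‖²`) minimized over `Δ` at
`w_P`, and any symmetric `Ĥ`, `ĥ` with `M̂(w) = wᵀĤw − 2ĥᵀw` and `ŵ ∈ Δ` satisfying
`M̂(ŵ) ≤ M̂(w_P)`, we have `η‖ŵ − w_P‖² ≤ (M̂(w_P) − M(w_P)) − (M̂(ŵ) − M(ŵ))`. -/
theorem stmt18 {K : ℕ} (hK : 0 < K) (η : ℝ) (hη : 0 ≤ η)
    (H : Matrix (Fin K) (Fin K) ℝ) (hHsymm : H.IsSymm)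
    (hHlb : ∀ x : Fin K → ℝ, η * ∑ j, (x j) ^ 2 ≤ x ⬝ᵥ (H *ᵥ x))
    (h : Fin K → ℝ)
    (M : (Fin K → ℝ) → ℝ)
    (hM : ∀ w, M w = w ⬝ᵥ (H *ᵥ w) - 2 * (h ⬝ᵥ w))
    (Hhat : Matrix (Fin K) (Fin K) ℝ) (hHhatsymm : Hhat.IsSymm)
    (hhat : Fin K → ℝ)
    (Mhat : (Fin K → ℝ) → ℝ)
    (hMhat : ∀ w, Mhat w = w ⬝ᵥ (Hhat *ᵥ w) - 2 * (hhat ⬝ᵥ w))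
    (wP : Fin K → ℝ) (hwP : wP ∈ simplex K)
    (hwPmin : ∀ w ∈ simplex K, M wP ≤ M w)
    (what : Fin K → ℝ) (hwhat : what ∈ simplex K)
    (hwhatmin : Mhat what ≤ Mhat wP) :
    η * ∑ j, (what j - wP j) ^ 2
      ≤ (Mhat wP - M wP) - (Mhat what - M what) := by
  set d : Fin K → ℝ := what - wP with hd
  have hsym : ∀ x y : Fin K → ℝ, x ⬝ᵥ (H *ᵥ y) = y ⬝ᵥ (H *ᵥ x) := by
    intro x y
    rw [dotProduct_mulVec, ← mulVec_transpose, hHsymm.eq, dotProduct_comm]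
  set q : ℝ := d ⬝ᵥ (H *ᵥ d) with hq
  set g : ℝ := 2 * (d ⬝ᵥ (H *ᵥ wP)) - 2 * (h ⬝ᵥ d) with hg
  have expand : ∀ t : ℝ, M (wP + t • d) = M wP + t * g + t ^ 2 * q := by
    intro t
    have e1 : wP ⬝ᵥ (H *ᵥ d) = d ⬝ᵥ (H *ᵥ wP) := hsym wP d
    simp only [hM, mulVec_add, mulVec_smul, dotProduct_add, add_dotProduct,
      dotProduct_smul, smul_dotProduct, smul_eq_mul, e1, hg, hq]
    ring
  have hmem : ∀ t : ℝ, 0 ≤ t → t ≤ 1 → wP + t • d ∈ simplex K := by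
    intro t ht0 ht1
    obtain ⟨hwP1, hwP2⟩ := hwP
    obtain ⟨hwh1, hwh2⟩ := hwhat
    constructor
    · intro j
      have h1 := hwP1 j
      have h2 := hwh1 j
      simp only [hd, Pi.add_apply, Pi.smul_apply, Pi.sub_apply, smul_eq_mul]
      nlinarith
    · have : ∑ j, (wP + t • d) j
          = ∑ j, wP j + t * (∑ j, what j - ∑ j, wP j) := by
        simp only [hd, Pi.add_apply, Pi.smul_apply, Pi.sub_apply, smul_eq_mul]
        rw [Finset.sum_add_distrib, ← Finset.mul_sum, Finset.sum_sub_distrib]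
      rw [this, hwP2, hwh2]; ring
  have hineq : ∀ t : ℝ, 0 ≤ t → t ≤ 1 → 0 ≤ t * g + t ^ 2 * q := by
    intro t ht0 ht1
    have := hwPmin _ (hmem t ht0 ht1)
    rw [expand t] at this
    linarith
  have hq0 : η * ∑ j, (d j) ^ 2 ≤ q := hHlb d
  have hsumnn : 0 ≤ ∑ j, (d j) ^ 2 := Finset.sum_nonneg fun j _ => sq_nonneg _
  have hqnn : 0 ≤ q := le_trans (mul_nonneg hη hsumnn) hq0
  have hg0 : 0 ≤ g := by
    by_contra hlt
    push_neg at hlt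
    have hq1 : 0 < q + 1 := by linarith
    set t : ℝ := min 1 (-g / (q + 1)) with htdef
    have htp : 0 < t := lt_min one_pos (div_pos (by linarith) hq1)
    have ht1 : t ≤ 1 := min_le_left _ _
    have htle : t ≤ -g / (q + 1) := min_le_right _ _
    have h1 := hineq t htp.le ht1
    have h2 : g + t * q < 0 := by
      have hmul : t * q ≤ (-g / (q + 1)) * q := mul_le_mul_of_nonneg_right htle hqnn
      have hgq : g + (-g / (q + 1)) * q = g / (q + 1) := by field_simp; ring
      have : g / (q + 1) < 0 := div_neg_of_neg_of_pos hlt hq1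
      linarith
    nlinarith [mul_pos htp (show (0:ℝ) < -(g + t * q) by linarith)]
  have hMdiff : M what - M wP = g + q := by
    have e := expand 1
    have : wP + (1:ℝ) • d = what := by
      simp [hd]
    rw [this] at e
    rw [e]; ring
  have hgoal : η * ∑ j, (d j) ^ 2 ≤ M what - M wP := by
    rw [hMdiff]; linarith
  have : ∑ j, (what j - wP j) ^ 2 = ∑ j, (d j) ^ 2 := by
    simp [hd]
  rw [this]
  linarith
end

section
/- (Uniform √n-consistency of the estimated weight, conditional form.) Let K ≥ 1, η > 0, and let 𝒫 be a nonempty set. For each P ∈ 𝒫 let H_P be a symmetric K×K real matrix with xᵀH_Px ≥ η‖x‖² for all x ∈ ℝ^K, let h_P ∈ ℝ^K, define M_P(w) := wᵀH_Pw − 2h_Pᵀw, and let w_P ∈ Δ be a minimizer of M_P over Δ. For each n ∈ ℕ and P ∈ 𝒫, let a probability space carry a random symmetric K×K matrix Ĥ_{n,P}, a random vector ĥ_{n,P} ∈ ℝ^K, and a Δ-valued random vector ŵ_{n,P} that almost surely minimizes M̂_{n,P}(w) := wᵀĤ_{n,P}w − 2ĥ_{n,P}ᵀw over Δ; write D_{n,P}(w)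 := M̂_{n,P}(w) − M_P(w). Assume: (a) for every ε > 0, lim_{n→∞} sup_{P∈𝒫} Pr_{n,P}( ‖ŵ_{n,P} − w_P‖ > ε ) = 0; and (b) for every sequence of positive reals δ_n → 0 and every ε > 0, there exists M > 0 such that limsup_{n→∞} sup_{P∈𝒫} Pr_{n,P}( sup_{w∈Δ, ‖w−w_P‖≤δ_n} |D_{n,P}(w) − D_{n,P}(w_P)| > M δ_n n^{−1/2} ) < ε. Then lim_{M→∞} limsup_{n→∞} sup_{P∈𝒫} Pr_{n,P}( √n ‖ŵ_{n,P} − w_P‖ > M ) = 0. -/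
/-!
Along the segment from `w_P` to `ŵ` both objectives are quadratic in the step. Strong convexity
and the optimality of `w_P` on `Δ` make `M_P` gain at least `η r² s²` at step `s`, where
`r = ‖ŵ - w_P‖`, while `ŵ` beats `w_P` for `M̂`. Since `D` is quadratic along the segment too,
its values at the steps `δ / r` and `δ / (2r)` bound its value at `ŵ`; hence `r > δ` forces `D`
to move by more than `η δ² / 12` within distance `δ` of `w_P`. For `δ = k / √n` this is the
event of (b) at threshold `η k / 12`, and a diagonal choice of radii turns (b) into one `k` for
which these events have uniformly small probability.
-/

open Matrix MeasureTheory Filter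

noncomputable def euclidNorm {K : ℕ} (x : Fin K → ℝ) : ℝ :=
  Real.sqrt (∑ j, (x j) ^ 2)

open Topology
open scoped ENNReal

lemma convex_simplex (K : ℕ) : Convex ℝ (simplex K) :=
  convex_stdSimplex ℝ (Fin K)

lemma euclidNorm_sq {K : ℕ} (x : Fin K → ℝ) : euclidNorm x ^ 2 = ∑ j, x j ^ 2 :=
  Real.sq_sqrt (by positivity)

lemma euclidNorm_smul {K : ℕ} (s : ℝ) (x : Fin K → ℝ) :
    euclidNorm (s • x) = |s| * euclidNorm x := by
  simp only [euclidNorm, Pi.smul_apply, smul_eq_mul, mul_pow, ← Finset.mul_sum,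
    Real.sqrt_mul (sq_nonneg s), Real.sqrt_sq_eq_abs]

section Quadratic

variable {ι : Type*} [Fintype ι]

def quadObj (A : Matrix ι ι ℝ) (c w : ι → ℝ) : ℝ :=
  w ⬝ᵥ (A *ᵥ w) - 2 * (c ⬝ᵥ w)

lemma quadObj_add_smul_sub_quadObj (A : Matrix ι ι ℝ) (c x u : ι → ℝ) (s : ℝ) :
    quadObj A c (x + s • u) - quadObj A c x =
      u ⬝ᵥ (A *ᵥ u) * s ^ 2 + (u ⬝ᵥ (A *ᵥ x) + x ⬝ᵥ (A *ᵥ u) - 2 * (c ⬝ᵥ u)) * s := by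
  simp only [quadObj, mulVec_add, mulVec_smul, dotProduct_add, add_dotProduct,
    smul_dotProduct, dotProduct_smul, smul_eq_mul]
  ring

end Quadratic

lemma nonneg_of_forall_mul_sq_add_mul_nonneg {a b : ℝ}
    (h : ∀ s ∈ Set.Ioc (0 : ℝ) 1, 0 ≤ a * s ^ 2 + b * s) : 0 ≤ b := by
  by_contra! hb
  set s := min 1 (-b / (|a| + 1))
  have hs0 : 0 < s := lt_min one_pos (div_pos (neg_pos.2 hb) (by positivity))
  have has : |a| * s < -b := by
    calc |a| * s ≤ |a| * (-b / (|a| + 1)) := by gcongr; exact min_le_right _ _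
      _ < -b := by
        rw [mul_div_assoc', div_lt_iff₀ (by positivity)]
        nlinarith
  have := h s ⟨hs0, min_le_left _ _⟩
  nlinarith [mul_pos hs0 (by linarith : 0 < -b - |a| * s),
    mul_le_mul_of_nonneg_right (le_abs_self a) (sq_nonneg s)]

lemma abs_add_mul_sq_le_of_abs_le_of_abs_le {Q L t T : ℝ} (ht0 : 0 < t) (ht1 : t ≤ 1)
    (h₁ : |Q * t ^ 2 + L * t| ≤ T) (h₂ : |Q * (t / 2) ^ 2 + L * (t / 2)| ≤ T) :
    |Q + L| * t ^ 2 ≤ 11 * T := by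
  have hT : 0 ≤ T := (abs_nonneg _).trans h₁
  have h₂' : |Q * t ^ 2 / 4 + L * t / 2| ≤ T := by convert h₂ using 2; ring
  -- `Q t²` and `L t` are linear combinations of the values at `t` and `t / 2`.
  have hQ : |Q * t ^ 2| ≤ 6 * T := by
    rw [abs_le] at h₁ h₂' ⊢; constructor <;> linarith
  have hL : |L * t| ≤ 5 * T := by
    rw [abs_le] at h₁ h₂' ⊢; constructor <;> linarith
  calc |Q + L| * t ^ 2 = |Q * t ^ 2 + L * t * t| := by
        rw [show Q * t ^ 2 + L * t * t = (Q + L) * t ^ 2 by ring, abs_mul,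
          abs_of_pos (pow_pos ht0 2)]
    _ ≤ |Q * t ^ 2| + |L * t| * t := by
        rw [← abs_of_pos ht0, ← abs_mul, abs_of_pos ht0]; exact abs_add_le _ _
    _ ≤ 6 * T + 5 * T * 1 := by gcongr
    _ = 11 * T := by ring

lemma exists_abs_sub_gt_of_lt_euclidNorm {K : ℕ} {S : Set (Fin K → ℝ)} (hS : Convex ℝ S)
    {η δ : ℝ} (hη : 0 < η) (hδ : 0 < δ) {A Â : Matrix (Fin K) (Fin K) ℝ}
    {c ĉ w₀ ŵ : Fin K → ℝ} (hA : ∀ x, η * ∑ j, x j ^ 2 ≤ x ⬝ᵥ (A *ᵥ x))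
    (hw₀ : w₀ ∈ S) (hŵ : ŵ ∈ S) (hmin₀ : ∀ w ∈ S, quadObj A c w₀ ≤ quadObj A c w)
    (hŵw₀ : quadObj Â ĉ ŵ ≤ quadObj Â ĉ w₀) (hfar : δ < euclidNorm (ŵ - w₀)) :
    ∃ w ∈ S, euclidNorm (w - w₀) ≤ δ ∧
      η * δ ^ 2 / 12 <
        |(quadObj Â ĉ w - quadObj A c w) - (quadObj Â ĉ w₀ - quadObj A c w₀)| := by
  by_contra! hsmall
  set u := ŵ - w₀
  set r := euclidNorm u
  have hr : 0 < r := hδ.trans hfar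
  set t := δ / r
  have ht0 : 0 < t := div_pos hδ hr
  have ht1 : t ≤ 1 := (div_le_one hr).2 hfar.le
  have hseg : ∀ s ∈ Set.Icc (0 : ℝ) 1, w₀ + s • u ∈ S := fun s hs => hS.add_smul_sub_mem hw₀ hŵ hs
  have hdist : ∀ s, 0 ≤ s → euclidNorm (w₀ + s • u - w₀) = s * r := fun s hs => by
    rw [add_sub_cancel_left, euclidNorm_smul, abs_of_nonneg hs]
  have hM := quadObj_add_smul_sub_quadObj A c w₀ u
  have hM' := quadObj_add_smul_sub_quadObj Â ĉ w₀ u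
  set a := u ⬝ᵥ (A *ᵥ u)
  set b := u ⬝ᵥ (A *ᵥ w₀) + w₀ ⬝ᵥ (A *ᵥ u) - 2 * (c ⬝ᵥ u)
  set Q := u ⬝ᵥ (Â *ᵥ u) - a
  set L := u ⬝ᵥ (Â *ᵥ w₀) + w₀ ⬝ᵥ (Â *ᵥ u) - 2 * (ĉ ⬝ᵥ u) - b
  have hD : ∀ s, (quadObj Â ĉ (w₀ + s • u) - quadObj A c (w₀ + s • u)) -
      (quadObj Â ĉ w₀ - quadObj A c w₀) = Q * s ^ 2 + L * s := fun s => by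
    linear_combination hM' s - hM s
  have ha : η * r ^ 2 ≤ a := by rw [euclidNorm_sq]; exact hA u
  have hb : 0 ≤ b := nonneg_of_forall_mul_sq_add_mul_nonneg fun s hs => by
    rw [← hM s]; exact sub_nonneg.2 (hmin₀ _ (hseg s ⟨hs.1.le, hs.2⟩))
  have hQL : a + b ≤ |Q + L| := by
    have h1 := hM' 1
    rw [one_smul, add_sub_cancel] at h1
    linarith [neg_abs_le (Q + L)]
  have hT : ∀ s ∈ Set.Icc (0 : ℝ) 1, s * r ≤ δ → |Q * s ^ 2 + L * s| ≤ η * δ ^ 2 / 12 :=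
    fun s hs hsr => hD s ▸ hsmall _ (hseg s hs) (by rwa [hdist s hs.1])
  have htr : t * r = δ := div_mul_cancel₀ δ hr.ne'
  have key := abs_add_mul_sq_le_of_abs_le_of_abs_le ht0 ht1
    (hT t ⟨ht0.le, ht1⟩ htr.le) (hT (t / 2) ⟨by positivity, by linarith⟩ (by linarith))
  have : η * δ ^ 2 ≤ 11 * (η * δ ^ 2 / 12) :=
    calc η * δ ^ 2 = η * r ^ 2 * t ^ 2 := by rw [← htr]; ring
      _ ≤ |Q + L| * t ^ 2 := by gcongr; linarith
      _ ≤ 11 * (η * δ ^ 2 / 12) := key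
  nlinarith [mul_pos hη (pow_pos hδ 2)]

lemma StrictMono.tendsto_extend {α : Type*} {l : Filter α} {φ : ℕ → ℕ} (hφ : StrictMono φ)
    {g e : ℕ → α} (hg : Tendsto g atTop l) (he : Tendsto e atTop l) :
    Tendsto (Function.extend φ g e) atTop l := by
  intro U hU
  obtain ⟨J, hJ⟩ := eventually_atTop.1 (hg hU)
  obtain ⟨N, hN⟩ := eventually_atTop.1 (he hU)
  refine eventually_atTop.2 ⟨max N (φ J), fun n hn => ?_⟩
  by_cases hrange : ∃ j, φ j = n
  · obtain ⟨j, rfl⟩ := hrange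
    rw [hφ.injective.extend_apply]
    exact hJ j (hφ.le_iff_le.1 (le_of_max_le_right hn))
  · rw [Function.extend_apply' _ _ _ hrange]
    exact hN n (le_of_max_le_left hn)

/-- `B c d n` is the size of a bad event at threshold `c` and radius `d`. The hypothesis only
provides a threshold for each null sequence of radii separately; running it on the diagonal
radii `r k (φ k)` yields a single `k` with threshold `κ k`. -/
lemma exists_eventually_lt_of_forall_tendsto_zero {B : ℝ → ℝ → ℕ → ℝ≥0∞}
    (hB : ∀ d n, 0 < d → Antitone fun c => B c d n) {r : ℕ → ℕ → ℝ}
    (hr0 : ∀ k, Tendsto (r k) atTop (𝓝 0)) (hrpos : ∀ k, ∀ᶠ n in atTop, 0 < r k n)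
    {κ : ℕ → ℝ} (hκ : Tendsto κ atTop atTop) {ε : ℝ≥0∞}
    (hsmall : ∀ δ : ℕ → ℝ, (∀ n, 0 < δ n) → Tendsto δ atTop (𝓝 0) →
      ∃ c, limsup (fun n => B c (δ n) n) atTop < ε) :
    ∃ k, ∀ᶠ n in atTop, B (κ k) (r k n) n < ε := by
  by_contra! hbig
  have hfreq : ∀ k, ∃ᶠ n in atTop,
      ε ≤ B (κ k) (r k n) n ∧ 0 < r k n ∧ r k n < 1 / ((k : ℝ) + 1) := fun k =>
    (hbig k).and_eventually
      ((hrpos k).and ((hr0 k).eventually (gt_mem_nhds Nat.one_div_pos_of_nat)))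
  obtain ⟨φ, hφ, hφk⟩ := extraction_forall_of_frequently hfreq
  set δ := Function.extend φ (fun k => r k (φ k)) fun n => 1 / ((n : ℝ) + 1)
  have hδφ : ∀ k, δ (φ k) = r k (φ k) := hφ.injective.extend_apply _ _
  have hδpos : ∀ n, 0 < δ n := fun n => by
    by_cases hrange : ∃ k, φ k = n
    · obtain ⟨k, rfl⟩ := hrange
      exact hδφ k ▸ (hφk k).2.1
    · simp only [δ, Function.extend_apply' _ _ _ hrange]; positivity
  have hδ0 : Tendsto δ atTop (𝓝 0) :=
    hφ.tendsto_extend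
      (squeeze_zero (fun k => (hφk k).2.1.le) (fun k => (hφk k).2.2.le)
        tendsto_one_div_add_atTop_nhds_zero_nat)
      tendsto_one_div_add_atTop_nhds_zero_nat
  obtain ⟨c, hc⟩ := hsmall δ hδpos hδ0
  obtain ⟨k, hck, hk⟩ := ((hκ.eventually_ge_atTop c).and
    (hφ.tendsto_atTop.eventually (eventually_lt_of_limsup_lt hc))).exists
  rw [hδφ] at hk
  exact (hφk k).1.not_gt ((hB _ _ (hφk k).2.1 hck).trans_lt hk)

section Probability

variable {K : ℕ} {P Ω : Type*} [MeasurableSpace Ω]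

noncomputable def supProbIncrementGt (S : Set (Fin K → ℝ)) (μ : P → Measure Ω)
    (D : P → Ω → (Fin K → ℝ) → ℝ) (w₀ : P → Fin K → ℝ) (d τ : ℝ) : ℝ≥0∞ :=
  ⨆ p, μ p {ω | ∃ w ∈ S, euclidNorm (w - w₀ p) ≤ d ∧ τ < |D p ω w - D p ω (w₀ p)|}

lemma supProbIncrementGt_anti {S : Set (Fin K → ℝ)} {μ : P → Measure Ω}
    {D : P → Ω → (Fin K → ℝ) → ℝ} {w₀ : P → Fin K → ℝ} {d : ℝ} :
    Antitone (supProbIncrementGt S μ D w₀ d) := fun _ _ hττ' =>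
  iSup_mono fun _ => measure_mono fun _ ⟨w, hw, hwd, hlt⟩ => ⟨w, hw, hwd, hττ'.trans_lt hlt⟩

lemma iSup_measure_lt_euclidNorm_le_supProbIncrementGt {S : Set (Fin K → ℝ)} (hS : Convex ℝ S)
    {μ : P → Measure Ω} {η δ : ℝ} (hη : 0 < η) (hδ : 0 < δ)
    {A : P → Matrix (Fin K) (Fin K) ℝ} {Â : P → Ω → Matrix (Fin K) (Fin K) ℝ}
    {c w₀ : P → Fin K → ℝ} {ĉ ŵ : P → Ω → Fin K → ℝ}
    (hA : ∀ p x, η * ∑ j, x j ^ 2 ≤ x ⬝ᵥ (A p *ᵥ x)) (hw₀ : ∀ p, w₀ p ∈ S)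
    (hŵ : ∀ p ω, ŵ p ω ∈ S)
    (hmin₀ : ∀ p, ∀ w ∈ S, quadObj (A p) (c p) (w₀ p) ≤ quadObj (A p) (c p) w)
    (hŵw₀ : ∀ p, ∀ᵐ ω ∂μ p, quadObj (Â p ω) (ĉ p ω) (ŵ p ω) ≤ quadObj (Â p ω) (ĉ p ω) (w₀ p)) :
    ⨆ p, μ p {ω | δ < euclidNorm (ŵ p ω - w₀ p)} ≤
      supProbIncrementGt S μ (fun p ω w => quadObj (Â p ω) (ĉ p ω) w - quadObj (A p) (c p) w)
        w₀ δ (η * δ ^ 2 / 12) :=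
  iSup_mono fun p => measure_mono_ae <| (hŵw₀ p).mono fun _ hω hfar =>
    exists_abs_sub_gt_of_lt_euclidNorm hS hη hδ (hA p) (hw₀ p) (hŵ _ _) (hmin₀ p) hω hfar

lemma exists_eventually_supProbIncrementGt_lt {S : Set (Fin K → ℝ)} {μ : ℕ → P → Measure Ω}
    {D : ℕ → P → Ω → (Fin K → ℝ) → ℝ} {w₀ : P → Fin K → ℝ} {η : ℝ} (hη : 0 < η) {ε : ℝ≥0∞}
    (hsmall : ∀ δ : ℕ → ℝ, (∀ n, 0 < δ n) → Tendsto δ atTop (𝓝 0) → ∃ c,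
      limsup (fun n => supProbIncrementGt S (μ n) (D n) w₀ (δ n) (c * δ n / Real.sqrt n)) atTop
        < ε) :
    ∃ k : ℕ, ∀ᶠ n in atTop, supProbIncrementGt S (μ n) (D n) w₀ (((k : ℝ) + 1) / Real.sqrt n)
      (η * (((k : ℝ) + 1) / Real.sqrt n) ^ 2 / 12) < ε := by
  obtain ⟨k, hk⟩ := exists_eventually_lt_of_forall_tendsto_zero
    (B := fun c d n => supProbIncrementGt S (μ n) (D n) w₀ d (c * d / Real.sqrt n))
    (fun d n hd c c' hcc' => supProbIncrementGt_anti <|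
      div_le_div_of_nonneg_right (mul_le_mul_of_nonneg_right hcc' hd.le) (Real.sqrt_nonneg _))
    (r := fun k n => ((k : ℝ) + 1) / Real.sqrt n)
    (fun k => tendsto_const_nhds.div_atTop
      (Real.tendsto_sqrt_atTop.comp tendsto_natCast_atTop_atTop))
    (fun k => (eventually_ge_atTop 1).mono fun n hn =>
      div_pos (by positivity) (Real.sqrt_pos.2 (by exact_mod_cast hn)))
    (κ := fun k => η * ((k : ℝ) + 1) / 12)
    (((tendsto_natCast_atTop_atTop.atTop_add tendsto_const_nhds).const_mul_atTop hη
      ).atTop_div_const (by norm_num))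
    hsmall
  refine ⟨k, hk.mono fun n hn => ?_⟩
  convert hn using 2
  ring

end Probability

theorem stmt19_general {K : ℕ} (η : ℝ) (hη : 0 < η)
    {P : Type*}
    (H : P → Matrix (Fin K) (Fin K) ℝ)
    (hHlb : ∀ p, ∀ x : Fin K → ℝ, η * ∑ j, (x j) ^ 2 ≤ x ⬝ᵥ (H p *ᵥ x))
    (h : P → Fin K → ℝ)
    (M : P → (Fin K → ℝ) → ℝ)
    (hM : ∀ p w, M p w = w ⬝ᵥ (H p *ᵥ w) - 2 * (h p ⬝ᵥ w))
    (wP : P → Fin K → ℝ) (hwP : ∀ p, wP p ∈ simplex K)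
    (hwPmin : ∀ p, ∀ w ∈ simplex K, M p (wP p) ≤ M p w)
    {Ω' : Type*} [MeasurableSpace Ω']
    (μ : ℕ → P → Measure Ω')
    (Hhat : ℕ → P → Ω' → Matrix (Fin K) (Fin K) ℝ)
    (hhat : ℕ → P → Ω' → (Fin K → ℝ))
    (Mhat : ℕ → P → Ω' → (Fin K → ℝ) → ℝ)
    (hMhat : ∀ n p ω w,
      Mhat n p ω w = w ⬝ᵥ (Hhat n p ω *ᵥ w) - 2 * (hhat n p ω ⬝ᵥ w))
    (what : ℕ → P → Ω' → (Fin K → ℝ))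
    (hwhatΔ : ∀ n p ω, what n p ω ∈ simplex K)
    (hwhatmin : ∀ n p, ∀ᵐ ω ∂(μ n p),
      ∀ w ∈ simplex K, Mhat n p ω (what n p ω) ≤ Mhat n p ω w)
    (hb : ∀ δ : ℕ → ℝ, (∀ n, 0 < δ n) → Tendsto δ atTop (nhds 0) →
      ∀ ε > (0 : ℝ), ∃ Mb > (0 : ℝ),
        limsup (fun n => ⨆ p, μ n p {ω | ∃ w ∈ simplex K,
            euclidNorm (w - wP p) ≤ δ n ∧
            Mb * δ n / Real.sqrt n <
              |(Mhat n p ω w - M p w) - (Mhat n p ω (wP p) - M p (wP p))|})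
          atTop < ENNReal.ofReal ε) :
    Tendsto (fun Mc : ℝ =>
        limsup (fun n => ⨆ p, μ n p
            {ω | Mc < Real.sqrt n * euclidNorm (what n p ω - wP p)})
          atTop)
      atTop (nhds 0) := by
  obtain rfl : M = fun p => quadObj (H p) (h p) := funext fun p => funext (hM p)
  obtain rfl : Mhat = fun n p ω => quadObj (Hhat n p ω) (hhat n p ω) :=
    funext fun n => funext fun p => funext fun ω => funext (hMhat n p ω)
  rw [ENNReal.tendsto_nhds_zero]
  intro ε hε
  obtain ⟨ε', -, hε'0, hε'⟩ := ENNReal.lt_iff_exists_real_btwn.1 hε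
  obtain ⟨k, hk⟩ := exists_eventually_supProbIncrementGt_lt (S := simplex K) (μ := μ) (w₀ := wP)
    (D := fun n p ω w => quadObj (Hhat n p ω) (hhat n p ω) w - quadObj (H p) (h p) w) hη
    fun δ hδ hδ0 => by
      obtain ⟨c, -, hc⟩ := hb δ hδ hδ0 ε' (ENNReal.ofReal_pos.1 hε'0)
      exact ⟨c, hc⟩
  filter_upwards [eventually_ge_atTop ((k : ℝ) + 1)] with Mc hMc
  refine (limsup_le_of_le (by isBoundedDefault) ?_).trans hε'.le
  filter_upwards [hk, eventually_ge_atTop 1] with n hn hn1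
  have hn' : 0 < Real.sqrt n := Real.sqrt_pos.2 (by exact_mod_cast hn1)
  refine le_trans ?_ ((iSup_measure_lt_euclidNorm_le_supProbIncrementGt (convex_simplex K) hη
    (div_pos (by positivity) hn') hHlb hwP (hwhatΔ n) hwPmin
    fun p => (hwhatmin n p).mono fun ω hmin => hmin _ (hwP p)).trans hn.le)
  exact iSup_mono fun p => measure_mono fun ω hω => (div_lt_iff₀' hn').2 (hMc.trans_lt hω)

/-- Uniform `√n`-consistency of the estimated weight (conditional form). For each `P` in a
nonempty collection `𝒫`, `M_P(w) = wᵀH_Pw − 2h_Pᵀw` with `xᵀH_Px ≥ η‖x‖²` is minimized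
over `Δ` at `w_P`; for each `n, P`, `ŵ_{n,P}` is a `Δ`-valued random vector almost surely
minimizing `M̂_{n,P}(w) = wᵀĤ_{n,P}w − 2ĥ_{n,P}ᵀw` over `Δ`, and `D_{n,P}(w) = M̂_{n,P}(w)
− M_P(w)`. If (a) `ŵ_{n,P}` is consistent for `w_P` uniformly in `P`, and (b) the usual
uniform stochastic-equicontinuity bound holds (stated via: the supremum over
`{w ∈ Δ : ‖w − w_P‖ ≤ δ_n}` of `|D_{n,P}(w) − D_{n,P}(w_P)|` exceeds `Mδ_n n^{−1/2}` iff
some such `w` exceeds it), then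
`lim_{M→∞} limsup_n sup_P Pr_{n,P}(√n‖ŵ_{n,P} − w_P‖ > M) = 0`. -/
theorem stmt19 {K : ℕ} (hK : 1 ≤ K) (η : ℝ) (hη : 0 < η)
    {P : Type*} [Nonempty P]
    (H : P → Matrix (Fin K) (Fin K) ℝ) (hHsymm : ∀ p, (H p).IsSymm)
    (hHlb : ∀ p, ∀ x : Fin K → ℝ, η * ∑ j, (x j) ^ 2 ≤ x ⬝ᵥ (H p *ᵥ x))
    (h : P → Fin K → ℝ)
    (M : P → (Fin K → ℝ) → ℝ)
    (hM : ∀ p w, M p w = w ⬝ᵥ (H p *ᵥ w) - 2 * (h p ⬝ᵥ w))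
    (wP : P → Fin K → ℝ) (hwP : ∀ p, wP p ∈ simplex K)
    (hwPmin : ∀ p, ∀ w ∈ simplex K, M p (wP p) ≤ M p w)
    {Ω' : Type*} [MeasurableSpace Ω']
    (μ : ℕ → P → Measure Ω') (hμ : ∀ n p, IsProbabilityMeasure (μ n p))
    (Hhat : ℕ → P → Ω' → Matrix (Fin K) (Fin K) ℝ)
    (hHhatsymm : ∀ n p ω, (Hhat n p ω).IsSymm)
    (hHhatmeas : ∀ n p i j, Measurable (fun ω => Hhat n p ω i j))
    (hhat : ℕ → P → Ω' → (Fin K → ℝ))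
    (hhhatmeas : ∀ n p, Measurable (hhat n p))
    (Mhat : ℕ → P → Ω' → (Fin K → ℝ) → ℝ)
    (hMhat : ∀ n p ω w,
      Mhat n p ω w = w ⬝ᵥ (Hhat n p ω *ᵥ w) - 2 * (hhat n p ω ⬝ᵥ w))
    (what : ℕ → P → Ω' → (Fin K → ℝ))
    (hwhatmeas : ∀ n p, Measurable (what n p))
    (hwhatΔ : ∀ n p ω, what n p ω ∈ simplex K)
    (hwhatmin : ∀ n p, ∀ᵐ ω ∂(μ n p),
      ∀ w ∈ simplex K, Mhat n p ω (what n p ω) ≤ Mhat n p ω w)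
    (ha : ∀ ε > (0 : ℝ),
      Tendsto (fun n => ⨆ p, μ n p {ω | ε < euclidNorm (what n p ω - wP p)})
        atTop (nhds 0))
    (hb : ∀ δ : ℕ → ℝ, (∀ n, 0 < δ n) → Tendsto δ atTop (nhds 0) →
      ∀ ε > (0 : ℝ), ∃ Mb > (0 : ℝ),
        limsup (fun n => ⨆ p, μ n p {ω | ∃ w ∈ simplex K,
            euclidNorm (w - wP p) ≤ δ n ∧
            Mb * δ n / Real.sqrt n <
              |(Mhat n p ω w - M p w) - (Mhat n p ω (wP p) - M p (wP p))|})
          atTop < ENNReal.ofReal ε) :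
    Tendsto (fun Mc : ℝ =>
        limsup (fun n => ⨆ p, μ n p
            {ω | Mc < Real.sqrt n * euclidNorm (what n p ω - wP p)})
          atTop)
      atTop (nhds 0) :=
  stmt19_general η hη H hHlb h M hM wP hwP hwPmin μ Hhat hhat Mhat hMhat what hwhatΔ hwhatmin hb
end
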